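/- arXiv:1606.01948 — 5 statements merged into one kernel-verified Lean document; each statement's English description precedes it below -/
import Mathlib

section
/- Let $x$ be an $n \times n$ matrix over a commutative ring, let $I, J \subseteq \{1,\dots,n\}$ be subsets with $|I| = |J|$, let $i < k$ be indices not in $I$, and let $j < l$ be indices not in $J$. Denoting by $\Delta^{A,B}(x)$ the determinant of the submatrix of $x$ with rows indexed by $A$ and columns indexed by $B$ (both taken in increasing order), one has $\Delta^{I\cup\{i\},J\cup\{j\}}(x)\,\Delta^{I\cup\{k\},J\cup\{l\}}(x) = \Delta^{I\cup\{i\},J\cup\{l\}}(x)\,\Delta^{I\cup\{k\},J\cup\{j\}}(x) + \Delta^{I,J}(x)\,\Delta^{I\cup\{i,k\},J\cup\{j,l\}}(x)$. -/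
/-- The minor `Δ^{A,B}(x)`: determinant of the submatrix of `x` with rows indexed
by `A` and columns indexed by `B`, both taken in increasing order. By convention it
is `0` when `|A| ≠ |B|` (and `1` when both are empty). -/
def minor {n : ℕ} {R : Type*} [CommRing R] (x : Matrix (Fin n) (Fin n) R)
    (A B : Finset (Fin n)) : R :=
  if h : A.card = B.card then
    Matrix.det (Matrix.of fun i j : Fin A.card =>
      x (A.orderEmbOfFin rfl i) (B.orderEmbOfFin h.symm j))
  else 0

/-!
Let `r` and `s` enumerate `I ∪ {i, k}` and `J ∪ {j, l}` increasingly. All six minors are then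
determinants of `y = x.submatrix r s` with at most two rows and two columns deleted, and the
identity becomes the Desnanot–Jacobi identity for `y`, i.e. Jacobi's theorem for `2 × 2` minors
of `adj y`. For the latter, multiply `y` by the identity matrix with columns `c, d` replaced by
columns `a, b` of `adj y`: the product is `y` with those columns replaced by `det y • e_a` and
`det y • e_b`, so comparing determinants gives `det y` times the adjugate minor as `det y ^ 2`
times the complementary minor. Cancelling `det y` is legitimate for the generic matrix over
`ℤ[X_pq]`, and the identity then specialises to every commutative ring.
-/

namespace Matrix

variable {R : Type*} [CommRing R]

theorem det_updateCol_single {N : ℕ} (A : Matrix (Fin (N + 1)) (Fin (N + 1)) R)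
    (i j : Fin (N + 1)) :
    (A.updateCol j (Pi.single i 1)).det
      = (-1) ^ (i + j : ℕ) * (A.submatrix i.succAbove j.succAbove).det := by
  rw [← det_transpose, ← updateRow_transpose, ← adjugate_apply,
    adjugate_fin_succ_eq_det_submatrix, ← transpose_submatrix, det_transpose, add_comm]

theorem submatrix_updateCol_of_injective {α l m n o : Type*} [DecidableEq n] [DecidableEq o]
    (A : Matrix m n α) (f : l → m) {g : o → n} (hg : Function.Injective g) (q : o)
    (v : m → α) :
    (A.updateCol (g q) v).submatrix f g = (A.submatrix f g).updateCol q (v ∘ f) := by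
  ext p t
  simp [updateCol_apply, hg.eq_iff]

theorem det_updateCol_updateCol_one {n : Type*} [Fintype n] [DecidableEq n] {c d : n}
    (hcd : c ≠ d) (u v : n → R) :
    (((1 : Matrix n n R).updateCol c u).updateCol d v).det = u c * v d - v c * u d := by
  let U : Matrix n (Fin 2) R :=
    of fun p => ![u p - (1 : Matrix n n R) p c, v p - (1 : Matrix n n R) p d]
  let V : Matrix (Fin 2) n R := of ![Pi.single c 1, Pi.single d 1]
  have hM : ((1 : Matrix n n R).updateCol c u).updateCol d v = 1 + U * V := by
    ext p q
    by_cases hqd : q = d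
    · subst hqd; simp [U, V, mul_apply, Fin.sum_univ_two, one_apply, hcd]
    by_cases hqc : q = c
    · subst hqc; simp [U, V, mul_apply, Fin.sum_univ_two, one_apply, hqd]
    · simp [U, V, mul_apply, Fin.sum_univ_two, one_apply, hqd, hqc]
  have h2 : 1 + V * U = !![u c, v c; u d, v d] := by
    ext s t
    fin_cases s <;> fin_cases t <;> simp [U, V, one_apply, hcd, hcd.symm]
  rw [hM, det_one_add_mul_comm, h2, det_fin_two_of]

theorem det_mul_adjugate_two_minor {N : ℕ} (y : Matrix (Fin (N + 2)) (Fin (N + 2)) R)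
    (a c : Fin (N + 2)) (b' d' : Fin (N + 1)) :
    y.det * (y.adjugate c a * y.adjugate (c.succAbove d') (a.succAbove b')
        - y.adjugate c (a.succAbove b') * y.adjugate (c.succAbove d') a)
      = y.det ^ 2 * ((-1) ^ (a + c : ℕ) * ((-1) ^ (b' + d' : ℕ)
        * (y.submatrix (a.succAbove ∘ b'.succAbove) (c.succAbove ∘ d'.succAbove)).det)) := by
  set b := a.succAbove b'
  set d := c.succAbove d'
  have hcd : c ≠ d := (Fin.succAbove_ne c d').symm
  have hcol : ∀ p, y *ᵥ (fun t => y.adjugate t p) = y.det • Pi.single p 1 := fun p => by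
    ext q
    simpa [mulVec, dotProduct, mul_apply, one_apply, Pi.single_apply, eq_comm] using
      congrFun (congrFun (mul_adjugate y) q) p
  calc _ = (y * ((1 : Matrix _ _ R).updateCol c (fun t => y.adjugate t a)).updateCol d
          (fun t => y.adjugate t b)).det := by
        rw [det_mul, det_updateCol_updateCol_one hcd]
    _ = y.det ^ 2 * ((y.updateCol c (Pi.single a 1)).updateCol d (Pi.single b 1)).det := by
        rw [mul_updateCol, mul_updateCol, mul_one, hcol, hcol, updateCol_comm _ hcd,
          det_updateCol_smul, updateCol_comm _ hcd.symm, det_updateCol_smul, sq, mul_assoc]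
    _ = _ := by
        have hb : Pi.single b 1 ∘ a.succAbove = Pi.single b' (1 : R) := by
          ext t
          simp [b, Pi.single_apply]
        rw [updateCol_comm _ hcd, det_updateCol_single,
          submatrix_updateCol_of_injective _ _ Fin.succAbove_right_injective, hb,
          det_updateCol_single, submatrix_submatrix]

theorem adjugate_two_minor_eq {N : ℕ} (y : Matrix (Fin (N + 2)) (Fin (N + 2)) R)
    (a c : Fin (N + 2)) (b' d' : Fin (N + 1)) :
    y.adjugate c a * y.adjugate (c.succAbove d') (a.succAbove b')
        - y.adjugate c (a.succAbove b') * y.adjugate (c.succAbove d') a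
      = y.det * ((-1) ^ (a + c : ℕ) * ((-1) ^ (b' + d' : ℕ)
        * (y.submatrix (a.succAbove ∘ b'.succAbove) (c.succAbove ∘ d'.succAbove)).det)) := by
  let X := mvPolynomialX (Fin (N + 2)) (Fin (N + 2)) ℤ
  suffices X.adjugate c a * X.adjugate (c.succAbove d') (a.succAbove b')
        - X.adjugate c (a.succAbove b') * X.adjugate (c.succAbove d') a
      = X.det * ((-1) ^ (a + c : ℕ) * ((-1) ^ (b' + d' : ℕ)
        * (X.submatrix (a.succAbove ∘ b'.succAbove) (c.succAbove ∘ d'.succAbove)).det)) by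
    let φ := MvPolynomial.aeval (R := ℤ) fun p : Fin (N + 2) × Fin (N + 2) => y p.1 p.2
    have hX : φ.mapMatrix X = y := mvPolynomialX_mapMatrix_aeval ℤ y
    have hadj : ∀ i j, φ (X.adjugate i j) = y.adjugate i j := fun i j => by
      rw [← hX, ← AlgHom.map_adjugate]; rfl
    have hdet : ∀ {m : ℕ} (f g : Fin m → Fin (N + 2)),
        φ (X.submatrix f g).det = (y.submatrix f g).det := fun f g => by
      rw [← hX, AlgHom.map_det]; rfl
    simpa only [map_sub, map_mul, map_pow, map_neg, map_one, hadj, hdet, AlgHom.map_det, hX]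
      using congrArg φ this
  apply mul_left_cancel₀ (det_mvPolynomialX_ne_zero (Fin (N + 2)) ℤ)
  rw [det_mul_adjugate_two_minor, sq, mul_assoc]

theorem desnanot_jacobi {N : ℕ} (y : Matrix (Fin (N + 2)) (Fin (N + 2)) R)
    {a b c d : Fin (N + 2)} {b' d' : Fin (N + 1)} (hab : a < b) (hcd : c < d)
    (hb : a.succAbove b' = b) (hd : c.succAbove d' = d) :
    (y.submatrix b.succAbove d.succAbove).det * (y.submatrix a.succAbove c.succAbove).det
      = (y.submatrix b.succAbove c.succAbove).det * (y.submatrix a.succAbove d.succAbove).det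
        + (y.submatrix (a.succAbove ∘ b'.succAbove) (c.succAbove ∘ d'.succAbove)).det
          * y.det := by
  have hb' : (b : ℕ) = b' + 1 := by
    subst hb
    rw [Fin.succAbove_of_le_castSucc _ _ ((Fin.lt_succAbove_iff_le_castSucc _ _).1 hab),
      Fin.val_succ]
  have hd' : (d : ℕ) = d' + 1 := by
    subst hd
    rw [Fin.succAbove_of_le_castSucc _ _ ((Fin.lt_succAbove_iff_le_castSucc _ _).1 hcd),
      Fin.val_succ]
  have h := adjugate_two_minor_eq y a c b' d'
  rw [hb, hd] at h
  simp only [adjugate_fin_succ_eq_det_submatrix, hb', hd'] at h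
  -- every sign in `h` equals `(-1) ^ (a + c + b' + d')` up to a factor `(-1) ^ 2`
  linear_combination (norm := ring_nf) (-1 : R) ^ (a + c + (b' + d') : ℕ) * h
  simp only [pow_mul', neg_one_sq, one_pow]
  ring

end Matrix

open Finset

theorem Finset.image_comp_succAbove {α : Type*} [DecidableEq α] {m : ℕ} {f : Fin (m + 1) → α}
    (hf : Function.Injective f) (p : Fin (m + 1)) :
    univ.image (f ∘ p.succAbove) = (univ.image f).erase (f p) := by
  rw [← image_image, ← image_erase hf]
  congr 1
  ext q
  simp

theorem Finset.exists_enum_insert_insert {n N : ℕ} {I : Finset (Fin n)} (hI : I.card = N)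
    {i k : Fin n} (hiI : i ∉ I) (hkI : k ∉ I) (hik : i < k) :
    ∃ (r : Fin (N + 2) → Fin n) (a b : Fin (N + 2)) (b' : Fin (N + 1)),
      StrictMono r ∧ a < b ∧ a.succAbove b' = b ∧
      univ.image r = insert i (insert k I) ∧ univ.image (r ∘ b.succAbove) = insert i I ∧
      univ.image (r ∘ a.succAbove) = insert k I ∧
      univ.image (r ∘ a.succAbove ∘ b'.succAbove) = I := by
  have hiK : i ∉ insert k I := by simp [hik.ne, hiI]
  have hcard : (insert i (insert k I)).card = N + 2 := by
    rw [card_insert_of_notMem hiK, card_insert_of_notMem hkI, hI]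
  set r := (insert i (insert k I)).orderEmbOfFin hcard
  have hr : univ.image r = insert i (insert k I) := image_orderEmbOfFin_univ _ hcard
  obtain ⟨a, -, ha⟩ := mem_image.1 (hr ▸ mem_insert_self i (insert k I))
  obtain ⟨b, -, hb⟩ := mem_image.1 (hr ▸ mem_insert_of_mem (mem_insert_self k I))
  have hab : a < b := r.lt_iff_lt.1 (ha ▸ hb ▸ hik)
  obtain ⟨b', hb'⟩ : ∃ b', a.succAbove b' = b := ⟨_, Fin.succAbove_pred_of_lt a b hab⟩
  have hrk : univ.image (r ∘ a.succAbove) = insert k I := by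
    rw [image_comp_succAbove r.injective, hr, ha, erase_insert hiK]
  refine ⟨r, a, b, b', r.strictMono, hab, hb', hr, ?_, hrk, ?_⟩
  · rw [image_comp_succAbove r.injective, hr, hb, erase_insert_of_ne hik.ne, erase_insert hkI]
  · rw [← Function.comp_assoc,
      image_comp_succAbove (r.injective.comp Fin.succAbove_right_injective), hrk,
      Function.comp_apply, hb', hb, erase_insert hkI]

theorem minor_image_eq_det {n m : ℕ} {R : Type*} [CommRing R] (x : Matrix (Fin n) (Fin n) R)
    {f g : Fin m → Fin n} (hf : StrictMono f) (hg : StrictMono g) :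
    minor x (univ.image f) (univ.image g) = (x.submatrix f g).det := by
  generalize hA : univ.image f = A
  generalize hB : univ.image g = B
  obtain rfl : A.card = m := by rw [← hA, card_image_of_injective _ hf.injective, card_fin]
  have hAB : A.card = B.card := by rw [← hB, card_image_of_injective _ hg.injective, card_fin]
  have hfA := orderEmbOfFin_unique rfl (fun t => hA ▸ mem_image_of_mem f (mem_univ t)) hf
  have hgB := orderEmbOfFin_unique hAB.symm (fun t => hB ▸ mem_image_of_mem g (mem_univ t)) hg
  rw [minor, dif_pos hAB, ← hfA, ← hgB]
  rfl

/-- Desnanot–Jacobi / Dodgson-type identity (Fomin–Zelevinsky, Theorem 1.17). -/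
theorem minor_exchange_identity {n : ℕ} {R : Type*} [CommRing R]
    (x : Matrix (Fin n) (Fin n) R) (I J : Finset (Fin n)) (hIJ : I.card = J.card)
    (i k : Fin n) (hiI : i ∉ I) (hkI : k ∉ I) (hik : i < k)
    (j l : Fin n) (hjJ : j ∉ J) (hlJ : l ∉ J) (hjl : j < l) :
    minor x (insert i I) (insert j J) * minor x (insert k I) (insert l J)
      = minor x (insert i I) (insert l J) * minor x (insert k I) (insert j J)
        + minor x I J * minor x (insert i (insert k I)) (insert j (insert l J)) := by
  -- abstracting `I.card` keeps the rewriting of `I` below type-correct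
  obtain ⟨N, hN⟩ : ∃ N, I.card = N := ⟨_, rfl⟩
  obtain ⟨r, a, b, b', hr, hab, hb', hS, hiI', hkI', hI'⟩ :=
    exists_enum_insert_insert hN hiI hkI hik
  obtain ⟨s, c, d, d', hs, hcd, hd', hT, hjJ', hlJ', hJ'⟩ :=
    exists_enum_insert_insert (hIJ.symm.trans hN) hjJ hlJ hjl
  rw [← hS, ← hT, ← hiI', ← hkI', ← hjJ', ← hlJ', ← hI', ← hJ']
  simp (maxDischargeDepth := 3) only [minor_image_eq_det, hr, hs, StrictMono.comp,
    Fin.strictMono_succAbove]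
  exact Matrix.desnanot_jacobi (x.submatrix r s) hab hcd hb' hd'
end

section
/- Let $x$ be an $n \times n$ matrix over a commutative ring, let $I, J \subseteq \{1,\dots,n\}$ with $|I| = |J|+1$, let $i \notin I$, and let $j < k < l$ be indices not in $J$. Then $\Delta^{I,J\cup\{k\}}(x)\,\Delta^{I\cup\{i\},J\cup\{j,l\}}(x) = \Delta^{I,J\cup\{j\}}(x)\,\Delta^{I\cup\{i\},J\cup\{k,l\}}(x) + \Delta^{I,J\cup\{l\}}(x)\,\Delta^{I\cup\{i\},J\cup\{j,k\}}(x)$. -/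
open Finset

namespace Finset
variable {α : Type*} [LinearOrder α]

theorem card_filter_lt_orderEmbOfFin (s : Finset α) {k : ℕ} (h : s.card = k) (t : Fin k) :
    #{y ∈ s | y < s.orderEmbOfFin h t} = t := by
  have : {y ∈ s | y < s.orderEmbOfFin h t} = (Iio t).map (s.orderEmbOfFin h).toEmbedding := by
    ext y
    simp only [mem_filter, mem_map, mem_Iio, RelEmbedding.coe_toEmbedding]
    constructor
    · rintro ⟨hy, hlt⟩
      obtain ⟨u, rfl⟩ : y ∈ Set.range (s.orderEmbOfFin h) := by rwa [range_orderEmbOfFin]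
      exact ⟨u, (s.orderEmbOfFin h).lt_iff_lt.1 hlt, rfl⟩
    · rintro ⟨u, hu, rfl⟩
      exact ⟨orderEmbOfFin_mem s h u, (s.orderEmbOfFin h).lt_iff_lt.2 hu⟩
  rw [this, card_map, Fin.card_Iio]

theorem orderEmbOfFin_insert {J : Finset α} {c : α} {k : ℕ} (hk : J.card = k)
    (h : (insert c J).card = k + 1) :
    ⇑((insert c J).orderEmbOfFin h)
      = Fin.insertNth ⟨#{e ∈ J | e < c}, Nat.lt_succ_of_le (hk ▸ card_filter_le J _)⟩ c
          (J.orderEmbOfFin hk) := by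
  set p : Fin (k + 1) := ⟨#{e ∈ J | e < c}, _⟩
  set e := (insert c J).orderEmbOfFin h
  have hep : e p = c := by
    obtain ⟨q, hq⟩ : c ∈ Set.range e := by simp [e]
    have hqp : q = p := by
      have hcount := card_filter_lt_orderEmbOfFin (insert c J) h q
      rw [← Fin.val_inj, ← hcount, hq, filter_insert, if_neg (lt_irrefl c)]
    rwa [← hqp]
  refine Fin.eq_insertNth_iff.2 ⟨hep, orderEmbOfFin_unique hk (fun s => ?_) ?_⟩
  · have hne : e (p.succAbove s) ≠ c := hep ▸ e.injective.ne (Fin.succAbove_ne p s)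
    have hmem : e (p.succAbove s) ∈ insert c J := orderEmbOfFin_mem _ h _
    simpa [Fin.removeNth, hne] using hmem
  · exact e.strictMono.comp (Fin.strictMono_succAbove p)

end Finset

theorem Fin.comp_insertNth {n : ℕ} {α β : Type*} (f : α → β) (p : Fin (n + 1)) (a : α)
    (v : Fin n → α) : f ∘ p.insertNth a v = p.insertNth (f a) (f ∘ v) := by
  ext t
  cases t using Fin.succAboveCases p <;> simp

namespace Matrix
variable {R : Type*} [CommRing R] {m : ℕ} {α β : Type*}

theorem det_submatrix_insertNth_left (M : Matrix α β R) (p : Fin (m + 1)) (a : α)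
    (v : Fin m → α) (c : Fin (m + 1) → β) :
    det (M.submatrix (p.insertNth a v) c)
      = (-1) ^ (p : ℕ) * det (M.submatrix (Fin.cons a v) c) := by
  let F : α → Fin (m + 1) → R := fun a j => M a (c j)
  have h := detRowAlternating.map_insertNth (M := Fin (m + 1) → R) p (F a) (F ∘ v)
  rw [← Fin.comp_insertNth, vecCons, ← Fin.comp_cons] at h
  change detRowAlternating (F ∘ _) = _ * detRowAlternating (F ∘ _)
  rw [h, zsmul_eq_mul]
  simp

theorem det_submatrix_insertNth_right (M : Matrix α β R) (r : Fin (m + 1) → α) (p : Fin (m + 1))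
    (b : β) (v : Fin m → β) :
    det (M.submatrix r (p.insertNth b v))
      = (-1) ^ (p : ℕ) * det (M.submatrix r (Fin.cons b v)) := by
  rw [← det_transpose, transpose_submatrix, det_submatrix_insertNth_left, ← transpose_submatrix,
    det_transpose]

theorem det_submatrix_cons_insertNth_right (M : Matrix α β R) (r : Fin (m + 2) → α)
    (p : Fin (m + 1)) (a b : β) (v : Fin m → β) :
    det (M.submatrix r (Fin.cons a (p.insertNth b v)))
      = (-1) ^ (p : ℕ) * det (M.submatrix r (Fin.cons a (Fin.cons b v))) := by
  let F : β → Fin (m + 2) → R := fun b j => M (r j) b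
  have h := (detRowAlternating.curryLeft (F a)).map_insertNth p (F b) (F ∘ v)
  simp only [AlternatingMap.curryLeft_apply_apply, vecCons] at h
  rw [← Fin.comp_insertNth, ← Fin.comp_cons, ← Fin.comp_cons, ← Fin.comp_cons] at h
  rw [← det_transpose (M.submatrix r _), ← det_transpose (M.submatrix r _)]
  change detRowAlternating (F ∘ _) = _ * detRowAlternating (F ∘ _)
  rw [h, zsmul_eq_mul]
  simp

theorem det_of_cons_linearMap_eq_zero {k : ℕ} (f : (Fin k → R) →ₗ[R] R)
    (V : Fin (k + 1) → Fin k → R) :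
    det (of fun t => (Fin.cons (f (V t)) (V t) : Fin (k + 1) → R)) = 0 := by
  set M := of fun t => (Fin.cons (f (V t)) (V t) : Fin (k + 1) → R)
  set c : Fin (k + 1) → R := Fin.cons 0 fun s => f fun j => if s = j then 1 else 0
  have hcol : Mᵀ 0 = ∑ u, c u • Mᵀ u := by
    ext t
    simp [M, c, Fin.sum_univ_succ, f.pi_apply_eq_sum_univ (V t), mul_comm]
  rw [← det_transpose, ← Mᵀ.updateRow_eq_self 0, hcol, det_updateRow_sum]
  simp [c]

theorem det_cons_three_term_of_linearMap (f : (Fin (m + 2) → R) →ₗ[R] R)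
    (v : Fin m → Fin (m + 2) → R) (hf : ∀ t, f (v t) = 0) (a b c : Fin (m + 2) → R) :
    f a * det (of (Fin.cons b (Fin.cons c v))) - f b * det (of (Fin.cons a (Fin.cons c v)))
      + f c * det (of (Fin.cons a (Fin.cons b v))) = 0 := by
  let V : Fin (m + 3) → Fin (m + 2) → R := Fin.cons a (Fin.cons b (Fin.cons c v))
  have h := det_of_cons_linearMap_eq_zero f V
  rw [det_succ_column_zero] at h
  change ∑ t : Fin (m + 3), (-1) ^ (t : ℕ) * f (V t) * det (of (V ∘ t.succAbove)) = 0 at h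
  rw [Fin.sum_univ_succ, Fin.sum_univ_succ, Fin.sum_univ_succ] at h
  have hrem : Fin.removeNth (α := fun _ => Fin (m + 2) → R) (Fin.succ 0)
      (Fin.cons b (Fin.cons c v)) = Fin.cons b v := by
    ext i : 1
    cases i using Fin.cases <;> simp [Fin.removeNth_apply]
  simp only [V, Fin.cons_zero, Fin.cons_succ, Fin.succAbove_zero, Fin.cons_comp_succ_succAbove,
    Fin.removeNth_zero, Fin.tail_cons, Fin.cons_comp_succ, hrem, hf] at h
  simp only [Fin.val_zero, Fin.val_succ, mul_zero, zero_mul, sum_const_zero, add_zero] at h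
  linear_combination h

theorem det_submatrix_three_term (M : Matrix (Fin (m + 2)) β R) (v : Fin m → β) (a b c : β) :
    det (M.submatrix Fin.succ (Fin.cons a v)) * det (M.submatrix id (Fin.cons b (Fin.cons c v)))
      - det (M.submatrix Fin.succ (Fin.cons b v))
        * det (M.submatrix id (Fin.cons a (Fin.cons c v)))
      + det (M.submatrix Fin.succ (Fin.cons c v))
        * det (M.submatrix id (Fin.cons a (Fin.cons b v))) = 0 := by
  let col : β → Fin (m + 2) → R := fun d s => M s d
  let f : (Fin (m + 2) → R) →ₗ[R] R :=
    detRowAlternating.toMultilinearMap.toLinearMap (Fin.cons 0 fun t => Fin.tail (col (v t))) 0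
      ∘ₗ LinearMap.funLeft R R Fin.succ
  have hf : ∀ d, f (col d) = det (M.submatrix Fin.succ (Fin.cons d v)) := by
    intro d
    rw [← det_transpose, transpose_submatrix]
    simp only [f, LinearMap.comp_apply, MultilinearMap.toLinearMap_apply, Fin.update_cons_zero]
    change _ = detRowAlternating ((fun e s => M s.succ e) ∘ Fin.cons d v)
    rw [Fin.comp_cons]
    rfl
  have hψ : ∀ d e, det (M.submatrix id (Fin.cons d (Fin.cons e v)))
      = det (of (Fin.cons (col d) (Fin.cons (col e) (col ∘ v)))) := by
    intro d e
    rw [← det_transpose, transpose_submatrix, ← Fin.comp_cons, ← Fin.comp_cons]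
    rfl
  have hv : ∀ t, f (col (v t)) = 0 := fun t => by
    rw [hf]
    exact det_zero_of_column_eq (Fin.succ_ne_zero t).symm fun s => rfl
  simpa [hf, hψ] using det_cons_three_term_of_linearMap f (col ∘ v) hv (col a) (col b) (col c)

end Matrix

section Minor
variable {n : ℕ} {R : Type*} [CommRing R]

theorem minor_eq_det (x : Matrix (Fin n) (Fin n) R) {A B : Finset (Fin n)} {k : ℕ}
    (hA : A.card = k) (hB : B.card = k) :
    minor x A B = (x.submatrix (A.orderEmbOfFin hA) (B.orderEmbOfFin hB)).det := by
  subst hA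
  rw [minor, dif_pos hB.symm]
  rfl

theorem minor_insert (x : Matrix (Fin n) (Fin n) R) {A J : Finset (Fin n)} {d : Fin n} {k : ℕ}
    (hA : A.card = k + 1) (hJ : J.card = k) (hd : d ∉ J) :
    minor x A (insert d J) = (-1) ^ #{e ∈ J | e < d}
      * (x.submatrix (A.orderEmbOfFin hA) (Fin.cons d (J.orderEmbOfFin hJ))).det := by
  have hdJ : (insert d J).card = k + 1 := by rw [card_insert_of_notMem hd, hJ]
  rw [minor_eq_det x hA hdJ, orderEmbOfFin_insert hJ hdJ, Matrix.det_submatrix_insertNth_right]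

theorem minor_insert_insert (x : Matrix (Fin n) (Fin n) R) {A J : Finset (Fin n)}
    {i d₁ d₂ : Fin n} {k : ℕ} (hA : A.card = k + 1) (hJ : J.card = k) (hi : i ∉ A)
    (h₁ : d₁ ∉ J) (h₂ : d₂ ∉ J) (h₁₂ : d₁ < d₂) :
    minor x (insert i A) (insert d₁ (insert d₂ J))
      = (-1) ^ (#{a ∈ A | a < i} + #{e ∈ J | e < d₁} + #{e ∈ J | e < d₂})
        * (x.submatrix (Fin.cons i (A.orderEmbOfFin hA))
            (Fin.cons d₁ (Fin.cons d₂ (J.orderEmbOfFin hJ)))).det := by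
  have hiA : (insert i A).card = k + 2 := by rw [card_insert_of_notMem hi, hA]
  have h₂J : (insert d₂ J).card = k + 1 := by rw [card_insert_of_notMem h₂, hJ]
  have h₁₂J : (insert d₁ (insert d₂ J)).card = k + 2 := by
    rw [card_insert_of_notMem (by simp [h₁₂.ne, h₁]), h₂J]
  have hcount : #{e ∈ insert d₂ J | e < d₁} = #{e ∈ J | e < d₁} := by
    rw [filter_insert, if_neg h₁₂.not_gt]
  rw [minor_eq_det x hiA h₁₂J, orderEmbOfFin_insert hA hiA, orderEmbOfFin_insert h₂J h₁₂J,
    orderEmbOfFin_insert hJ h₂J, Matrix.det_submatrix_insertNth_left,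
    Matrix.det_submatrix_insertNth_right, Matrix.det_submatrix_cons_insertNth_right]
  simp only [hcount]
  ring

end Minor

/-- The three-term (Plücker-type) minor identity of Fomin–Zelevinsky (Theorem 1.16). -/
theorem minor_three_term_identity {n : ℕ} {R : Type*} [CommRing R]
    (x : Matrix (Fin n) (Fin n) R) (I J : Finset (Fin n)) (hIJ : I.card = J.card + 1)
    (i : Fin n) (hiI : i ∉ I)
    (j k l : Fin n) (hjJ : j ∉ J) (hkJ : k ∉ J) (hlJ : l ∉ J)
    (hjk : j < k) (hkl : k < l) :
    minor x I (insert k J) * minor x (insert i I) (insert j (insert l J))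
      = minor x I (insert j J) * minor x (insert i I) (insert k (insert l J))
        + minor x I (insert l J) * minor x (insert i I) (insert j (insert k J)) := by
  rw [minor_insert x hIJ rfl hkJ, minor_insert x hIJ rfl hjJ, minor_insert x hIJ rfl hlJ,
    minor_insert_insert x hIJ rfl hiI hjJ hlJ (hjk.trans hkl),
    minor_insert_insert x hIJ rfl hiI hkJ hlJ hkl, minor_insert_insert x hIJ rfl hiI hjJ hkJ hjk]
  have h := Matrix.det_submatrix_three_term
    (x.submatrix (Fin.cons i (I.orderEmbOfFin hIJ)) id) (J.orderEmbOfFin rfl) j k l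
  simp only [Matrix.submatrix_submatrix, Fin.cons_comp_succ, Function.id_comp,
    Function.comp_id] at h
  linear_combination
    (-(-1) ^ (#{a ∈ I | a < i} + #{e ∈ J | e < j} + #{e ∈ J | e < k} + #{e ∈ J | e < l})) * h
end

section
/- Fix $n \geq 2$, a field $K$, and $1 \leq i \leq n-1$. With $h^i(X)$ the diagonal matrix whose first $i$ entries are $X$ and the rest $1$ (and $h^0(X) = h^n(X)$ interpreted with the same convention, using only indices in $\{0,\dots,n\}$), $e_i = I + E_{i,i+1}$, and $e_{-i} = I + E_{i+1,i}$, the following identity holds for all $X \in K$ with $X \neq 0$ and $X \neq -1$: $e_i\, h^i(X)\, e_{-i} = h^i(1+X)\, e_{-i}\, h^{i-1}(1+X^{-1})^{-1}\, h^i(X^{-1})\, h^{i+1}(1+X^{-1})^{-1}\, e_i\, h^i(1+X)$. -/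
/-!
Write `eᵢ = 1 + E_pq` and `e₋ᵢ = 1 + E_qp` with `q = p + 1`. For any diagonal `D`,
`(1 + E_pq) D (1 + E_qp) = D + d_q (E_pp + E_pq + E_qp)`, and the same identity with `p, q`
swapped handles the middle of the right-hand side. Both sides thereby collapse to
`hⁱ(X) + E_pp + E_pq + E_qp`, i.e. they differ from `hⁱ(X)` only by the block
`[[1 + X, 1], [1, 1]]` on rows `p, q`; what remains is a scalar identity per diagonal entry,
such as `(1 + X)² X⁻¹ (1 + X⁻¹)⁻² = X` above the block.
-/

/-- `h^i(X)`: the diagonal matrix whose first `i` diagonal entries equal `X` and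
whose remaining diagonal entries equal `1`. -/
def hMat (n : ℕ) (K : Type*) [Field K] (i : ℕ) (X : K) : Matrix (Fin n) (Fin n) K :=
  Matrix.diagonal fun a => if (a : ℕ) < i then X else 1

/-- `e_i = I + E_{i,i+1}` (indices 1-based). -/
def eMat (n : ℕ) (K : Type*) [Field K] (j : ℕ) : Matrix (Fin n) (Fin n) K :=
  Matrix.of fun a b =>
    if a = b then 1 else if (a : ℕ) + 1 = j ∧ (b : ℕ) = j then 1 else 0

/-- `e_{-i} = I + E_{i+1,i}` (indices 1-based). -/
def fMat (n : ℕ) (K : Type*) [Field K] (j : ℕ) : Matrix (Fin n) (Fin n) K :=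
  Matrix.of fun a b =>
    if a = b then 1 else if (a : ℕ) = j ∧ (b : ℕ) + 1 = j then 1 else 0

namespace Matrix

variable {n R : Type*} [Fintype n] [DecidableEq n] [CommRing R]

theorem diagonal_mul_single (d : n → R) (p q : n) (c : R) :
    diagonal d * single p q c = single p q (d p * c) := by
  ext a b
  by_cases h : p = a <;> simp [single, diagonal_mul, h]

theorem single_mul_diagonal (d : n → R) (p q : n) (c : R) :
    single p q c * diagonal d = single p q (c * d q) := by
  ext a b
  by_cases h : q = b <;> simp [single, mul_diagonal, h]

theorem diagonal_mul_single_mul_diagonal (u v : n → R) (p q : n) (c : R) :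
    diagonal u * single p q c * diagonal v = single p q (u p * c * v q) := by
  rw [diagonal_mul_single, single_mul_diagonal]

theorem one_add_single_mul_diagonal_mul_one_add_single (p q : n) (d : n → R) :
    (1 + single p q 1) * diagonal d * (1 + single q p 1)
      = diagonal d + single p p (d q) + single p q (d q) + single q p (d q) := by
  simp only [add_mul, mul_add, one_mul, mul_one, single_mul_diagonal, diagonal_mul_single,
    single_mul_single_same]
  abel

end Matrix

open Matrix

section

variable {n : ℕ} (K : Type*) [Field K]

/- `Fin n` is 0-based: the 1-based indices `i, i + 1` of `eMat n K i` are `p, q` with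
`p + 1 = q = i`. -/
theorem eMat_eq_one_add_single {p q : Fin n} (hpq : (p : ℕ) + 1 = q) :
    eMat n K q = 1 + single p q 1 := by
  ext a b
  simp only [eMat, of_apply, Matrix.add_apply, one_apply, single, Fin.ext_iff]
  split_ifs <;> first | omega | simp

theorem fMat_eq_one_add_single {p q : Fin n} (hpq : (p : ℕ) + 1 = q) :
    fMat n K q = 1 + single q p 1 := by
  ext a b
  simp only [fMat, of_apply, Matrix.add_apply, one_apply, single, Fin.ext_iff]
  split_ifs <;> first | omega | simp

variable {K}

theorem hMat_mul_hMat (k : ℕ) (Y Z : K) : hMat n K k Y * hMat n K k Z = hMat n K k (Y * Z) := by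
  simp only [hMat, diagonal_mul_diagonal]
  congr 1
  funext a
  split_ifs <;> simp

theorem hMat_inv (k : ℕ) {Y : K} (hY : Y ≠ 0) : (hMat n K k Y)⁻¹ = hMat n K k Y⁻¹ := by
  apply inv_eq_right_inv
  rw [hMat_mul_hMat, mul_inv_cancel₀ hY]
  simp only [hMat, ite_self, diagonal_one]

theorem one_add_single_mul_hMat_mul_one_add_single (p q : Fin n) (X : K) :
    (1 + single p q 1) * hMat n K q X * (1 + single q p 1)
      = hMat n K q X + single p p 1 + single p q 1 + single q p 1 := by
  rw [hMat, one_add_single_mul_diagonal_mul_one_add_single, if_neg (lt_irrefl _)]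

theorem hMat_mul_one_add_single_mul_hMat_mul_one_add_single_mul_hMat {p q : Fin n}
    (hpq : (p : ℕ) + 1 = q) {X : K} (hX0 : X ≠ 0) (hX1 : X ≠ -1) :
    hMat n K q (1 + X) * ((1 + single q p 1) * (hMat n K p (1 + X⁻¹)⁻¹ * hMat n K q X⁻¹ *
        hMat n K (q + 1) (1 + X⁻¹)⁻¹) * (1 + single p q 1)) * hMat n K q (1 + X)
      = hMat n K q X + single p p 1 + single p q 1 + single q p 1 := by
  have hpq' : (p : ℕ) < q := by omega
  have h1X : X + 1 ≠ 0 := fun h => hX1 (by linear_combination h)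
  have hc_inv : (1 + X⁻¹)⁻¹ = X / (X + 1) := by field_simp
  simp only [hMat, diagonal_mul_diagonal]
  rw [one_add_single_mul_diagonal_mul_one_add_single]
  simp only [add_mul, mul_add, diagonal_mul_diagonal, diagonal_mul_single_mul_diagonal, lt_irrefl,
    hpq', Nat.lt_succ_of_lt hpq', if_true, if_false, one_mul, mul_one, hc_inv]
  rw [add_right_comm _ (single q p _)]
  congr 1
  congr 1
  · rw [← diagonal_single, ← diagonal_single, diagonal_add, diagonal_add]
    congr 1
    funext a
    simp only [Pi.single_apply, Fin.ext_iff]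
    split_ifs <;> first | omega | field_simp <;> ring
  all_goals (congr 1; field_simp; ring)

end

theorem eMat_hMat_fMat_mutation_general (n : ℕ) (K : Type*) [Field K]
    (i : ℕ) (hi1 : 1 ≤ i) (hi : i ≤ n - 1) (X : K) (hX0 : X ≠ 0) (hX1 : X ≠ -1) :
    eMat n K i * hMat n K i X * fMat n K i
      = hMat n K i (1 + X) * fMat n K i * (hMat n K (i - 1) (1 + X⁻¹))⁻¹ *
          hMat n K i X⁻¹ * (hMat n K (i + 1) (1 + X⁻¹))⁻¹ * eMat n K i *
          hMat n K i (1 + X) := by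
  obtain ⟨q, rfl⟩ : ∃ q : Fin n, (q : ℕ) = i := ⟨⟨i, by omega⟩, rfl⟩
  obtain ⟨p, hpq⟩ : ∃ p : Fin n, (p : ℕ) + 1 = q := ⟨⟨q - 1, by omega⟩, by simp only; omega⟩
  have hc : 1 + X⁻¹ ≠ 0 := by
    rw [Ne, add_eq_zero_iff_eq_neg', inv_eq_iff_eq_inv, inv_neg, inv_one]
    exact hX1
  rw [eMat_eq_one_add_single K hpq, fMat_eq_one_add_single K hpq, hMat_inv _ hc, hMat_inv _ hc,
    show (q : ℕ) - 1 = p by omega, one_add_single_mul_hMat_mul_one_add_single,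
    ← hMat_mul_one_add_single_mul_hMat_mul_one_add_single_mul_hMat hpq hX0 hX1]
  simp only [Matrix.mul_assoc]

/-- Fock–Goncharov's identity underlying the cluster `𝒳`-mutation:
`eᵢ hⁱ(X) e₋ᵢ = hⁱ(1+X) e₋ᵢ hⁱ⁻¹(1+X⁻¹)⁻¹ hⁱ(X⁻¹) hⁱ⁺¹(1+X⁻¹)⁻¹ eᵢ hⁱ(1+X)`. -/
theorem eMat_hMat_fMat_mutation (n : ℕ) (hn : 2 ≤ n) (K : Type*) [Field K]
    (i : ℕ) (hi1 : 1 ≤ i) (hi : i ≤ n - 1) (X : K) (hX0 : X ≠ 0) (hX1 : X ≠ -1) :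
    eMat n K i * hMat n K i X * fMat n K i
      = hMat n K i (1 + X) * fMat n K i * (hMat n K (i - 1) (1 + X⁻¹))⁻¹ *
          hMat n K i X⁻¹ * (hMat n K (i + 1) (1 + X⁻¹))⁻¹ * eMat n K i *
          hMat n K i (1 + X) :=
  eMat_hMat_fMat_mutation_general n K i hi1 hi X hX0 hX1
end

section
/- Let $x$ be an $n \times n$ matrix over a commutative ring, and define the $n \times n$ matrix $M$ by $M_{ij} = (-1)^{i-j} \Delta^{I_i \setminus \{j\},\, I_{i-1}}(x)$, where $I_k = \{1,\dots,k\}$, $\Delta^{A,B}$ denotes the minor with rows $A$ and columns $B$ taken in increasing order, and by convention $\Delta^{A,B}(x) = 0$ when $|A| \neq |B|$ and $\Delta^{\emptyset,\emptyset}(x) = 1$. Then $M$ is lower triangular, its $i$th diagonal entry is the leading principal minor $\Delta^{I_{i-1},I_{i-1}}(x)$, and the product $M x$ is upper triangular. -/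
theorem Fin.sum_Iic_eq_sum_castLE {n : ℕ} {M : Type*} [AddCommMonoid M] (a : Fin n)
    (f : Fin n → M) :
    ∑ k ∈ Finset.Iic a, f k = ∑ i : Fin (a + 1), f (i.castLE a.isLt) := by
  have ha : (Fin.last a).castLE a.isLt = a := Fin.ext rfl
  rw [← ha, Fin.sum_Iic_castLE, ← Fin.top_eq_last, Finset.Iic_top]
  rfl

section

variable {n : ℕ} {R : Type*} [CommRing R]

open Finset

theorem minor_eq_det_submatrix (x : Matrix (Fin n) (Fin n) R) {A B : Finset (Fin n)} {k : ℕ}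
    {f g : Fin k → Fin n} (hA : A.card = k) (hB : B.card = k) (hfA : ∀ i, f i ∈ A)
    (hgB : ∀ j, g j ∈ B) (hf : StrictMono f) (hg : StrictMono g) :
    minor x A B = (x.submatrix f g).det := by
  subst hA
  rw [minor, dif_pos hB.symm, ← orderEmbOfFin_unique rfl hfA hf,
    ← orderEmbOfFin_unique hB hgB hg]
  rfl

theorem minor_Iic_erase_Iio_of_lt (x : Matrix (Fin n) (Fin n) R) {a b : Fin n} (hab : a < b) :
    minor x ((Iic a).erase b) (Iio a) = 0 := by
  rw [erase_eq_of_notMem (by simpa using hab), minor, dif_neg]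
  simp

def leadingBlock (x : Matrix (Fin n) (Fin n) R) (a : Fin n) :
    Matrix (Fin (a + 1)) (Fin (a + 1)) R :=
  x.submatrix (Fin.castLE a.isLt) (Fin.castLE a.isLt)

theorem adjugate_leadingBlock_last (x : Matrix (Fin n) (Fin n) R) (a : Fin n) (i : Fin (a + 1)) :
    (leadingBlock x a).adjugate (Fin.last a) i =
      (-1) ^ ((a : ℕ) + (i : ℕ)) * minor x ((Iic a).erase (i.castLE a.isLt)) (Iio a) := by
  have hcastLE : StrictMono (Fin.castLE a.isLt) := Fin.strictMono_castLE _
  rw [Matrix.adjugate_fin_succ_eq_det_submatrix, Fin.val_last, add_comm, Fin.succAbove_last,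
    minor_eq_det_submatrix x (k := a) _ (Fin.card_Iio a) _ _
      (hcastLE.comp (Fin.strictMono_succAbove i)) (hcastLE.comp Fin.strictMono_castSucc)]
  · rfl
  · rw [card_erase_of_mem (by simp [Fin.le_def]; omega), Fin.card_Iic, Nat.add_sub_cancel]
  · intro j
    refine mem_erase.2 ⟨(Fin.castLE_injective _).ne (Fin.succAbove_ne i j), ?_⟩
    simpa [Fin.le_def] using (Fin.le_last (i.succAbove j))
  · intro j
    simp [Fin.lt_def]

end

/-- In 0-based indexing, `Iᵢ \ {j}` is `(Iic a).erase b` and `Iᵢ₋₁` is `Iio a`, and the sign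
`(-1)^{i-j}` is written `(-1)^{i+j}`. -/
theorem M_lower_triangular_and_Mx_upper_triangular {n : ℕ} {R : Type*} [CommRing R]
    (x M : Matrix (Fin n) (Fin n) R)
    (hM : ∀ a b : Fin n,
      M a b = (-1 : R) ^ ((a : ℕ) + (b : ℕ)) *
        minor x ((Finset.Iic a).erase b) (Finset.Iio a)) :
    (∀ a b : Fin n, a < b → M a b = 0) ∧
    (∀ a : Fin n, M a a = minor x (Finset.Iio a) (Finset.Iio a)) ∧
    (∀ a b : Fin n, b < a → (M * x) a b = 0) := by
  have lower : ∀ a b : Fin n, a < b → M a b = 0 := fun a b hab => by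
    rw [hM, minor_Iic_erase_Iio_of_lt x hab, mul_zero]
  refine ⟨lower, fun a => ?_, fun a b hba => ?_⟩
  · rw [hM, Finset.Iic_erase, ← two_mul, pow_mul, neg_one_sq, one_pow, one_mul]
  · set b' : Fin (a + 1) := ⟨b, by omega⟩
    have hb' : b' ≠ Fin.last a := Fin.ne_of_lt (Fin.lt_def.2 hba)
    calc (M * x) a b = ∑ k ∈ Finset.Iic a, M a k * x k b := by
          rw [Matrix.mul_apply]
          exact (Finset.sum_subset (Finset.subset_univ _) fun k _ hk => by
            rw [lower a k (by simpa using hk), zero_mul]).symm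
      _ = ∑ i, (leadingBlock x a).adjugate (Fin.last a) i * leadingBlock x a i b' := by
          rw [Fin.sum_Iic_eq_sum_castLE]
          simp only [adjugate_leadingBlock_last, hM]
          rfl
      _ = 0 := by
          rw [← Matrix.mul_apply, Matrix.adjugate_mul, Matrix.smul_apply,
            Matrix.one_apply_ne hb'.symm, smul_zero]
end

section
/- Let $I$ be a finite set, $\epsilon : I \times I \to \mathbb{Z}$ skew-symmetric, $k \in I$, and $F$ a field. Given $A : I \to F^\times$, define $X_i = \prod_{j \in I} A_j^{\epsilon_{ij}}$ and assume $1 + X_k \neq 0$. Let $A'_k = A_k^{-1}\left(\prod_{\epsilon_{kj} > 0} A_j^{\epsilon_{kj}} + \prod_{\epsilon_{kj} < 0} A_j^{-\epsilon_{kj}}\right)$ and $A'_i = A_i$ for $i \neq k$, let $\epsilon' = \mu_k(\epsilon)$ be the mutated exchange matrix, and set $X'_i = \prod_{j \in I} (A'_j)^{\epsilon'_{ij}}$. Then $X'_k = X_k^{-1}$ and $X'_i = X_i (1 + X_k^{-\mathrm{sign}(\epsilon_{ik})})^{-\epsilon_{ik}}$ for $i \neq k$. -/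
/-!
Write `P = ∏ A_j^{[ε_kj]₊}` and `N = ∏ A_j^{[ε_kj]₋}`, so that `X_k = P / N` and
`A'_k A_k = P + N`. Away from row and column `k` the mutation adds `ε_ik [sign(ε_ik) ε_kj]₊` to
`ε_ij`; hence `X'_i = X_i (A'_k A_k / Q)^{-ε_ik}` with `Q = P` if `ε_ik > 0` and `Q = N` if
`ε_ik < 0`, and it remains to note `(P + N) / P = 1 + X_k⁻¹` and `(P + N) / N = 1 + X_k`.
Since `ε_kk = 0`, row `k` just changes sign and `X'_k = X_k⁻¹`.
-/

/-- Seed (quiver) mutation of a skew-symmetric exchange matrix at `k`. -/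
def mutMatrix {I : Type*} [DecidableEq I] (ε : I → I → ℤ) (k : I) : I → I → ℤ :=
  fun i j =>
    if i = k ∨ j = k then -ε i j
    else if ε i k * ε k j ≤ 0 then ε i j
    else ε i j + |ε i k| * ε k j

namespace Finset

variable {I G : Type*} [Fintype I] [CommGroupWithZero G]

theorem prod_zpow_add {A : I → G} (hA : ∀ j, A j ≠ 0) (e f : I → ℤ) :
    ∏ j, A j ^ (e j + f j) = (∏ j, A j ^ e j) * ∏ j, A j ^ f j := by
  rw [← prod_mul_distrib]
  exact prod_congr rfl fun j _ => zpow_add₀ (hA j) _ _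

theorem prod_zpow_eq_div_posPart_negPart {A : I → G} (hA : ∀ j, A j ≠ 0) (e : I → ℤ) :
    ∏ j, A j ^ e j = (∏ j, A j ^ (e j)⁺) / ∏ j, A j ^ (e j)⁻ := by
  rw [← prod_div_distrib]
  exact prod_congr rfl fun j _ => by rw [← zpow_sub₀ (hA j), posPart_sub_negPart]

theorem prod_filter_pos_zpow (A : I → G) (e : I → ℤ) :
    ∏ j ∈ univ.filter fun j => 0 < e j, A j ^ e j = ∏ j, A j ^ (e j)⁺ := by
  rw [prod_filter]
  refine prod_congr rfl fun j _ => ?_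
  split_ifs with h
  · rw [posPart_eq_self.2 h.le]
  · rw [posPart_eq_zero.2 (not_lt.1 h), zpow_zero]

theorem prod_filter_neg_zpow (A : I → G) (e : I → ℤ) :
    ∏ j ∈ univ.filter fun j => e j < 0, A j ^ (-e j) = ∏ j, A j ^ (e j)⁻ := by
  simpa only [Pi.neg_apply, neg_pos, posPart_neg] using prod_filter_pos_zpow A (-e)

theorem prod_zpow_eq_of_eq_off {A A' : I → G} {e e' : I → ℤ} [DecidableEq I] {k : I}
    (hAk : A k ≠ 0) (hA' : ∀ j ≠ k, A' j = A j) (he : ∀ j ≠ k, e j = e' j) :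
    ∏ j, A' j ^ e j = A' k ^ e k * (A k ^ e' k)⁻¹ * ∏ j, A j ^ e' j := by
  rw [← mul_prod_erase univ _ (mem_univ k),
    ← mul_prod_erase univ (fun j => A j ^ e' j) (mem_univ k), mul_assoc, inv_mul_cancel_left₀ (zpow_ne_zero _ hAk)]
  congr 1
  refine prod_congr rfl fun j hj => ?_
  rw [hA' j (ne_of_mem_erase hj), he j (ne_of_mem_erase hj)]

end Finset

open Finset

theorem ite_mul_nonpos_eq_mul_posPart (a b : ℤ) :
    (if a * b ≤ 0 then 0 else |a| * b) = a * (a.sign * b)⁺ := by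
  rcases lt_trichotomy a 0 with ha | rfl | ha
  · rw [Int.sign_eq_neg_one_of_neg ha, abs_of_neg ha, neg_one_mul, posPart_def]
    split_ifs with hab
    · rw [max_eq_right (by nlinarith)]; ring
    · rw [max_eq_left (by nlinarith)]; ring
  · simp
  · rw [Int.sign_eq_one_of_pos ha, abs_of_pos ha, one_mul, posPart_def]
    split_ifs with hab
    · rw [max_eq_right (by nlinarith)]; ring
    · rw [max_eq_left (by nlinarith)]

section mutMatrix

variable {I : Type*} [DecidableEq I] (ε : I → I → ℤ) (k : I)

theorem mutMatrix_self_left (j : I) : mutMatrix ε k k j = -ε k j := by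
  simp [mutMatrix]

theorem mutMatrix_self_right (i : I) : mutMatrix ε k i k = -ε i k := by
  simp [mutMatrix]

theorem mutMatrix_of_ne {i j : I} (hi : i ≠ k) (hj : j ≠ k) :
    mutMatrix ε k i j = ε i j + ε i k * ((ε i k).sign * ε k j)⁺ := by
  simp only [mutMatrix, hi, hj, or_self, if_false, ← ite_mul_nonpos_eq_mul_posPart]
  split_ifs <;> ring

end mutMatrix

section Mutation

variable {I G : Type*} [Fintype I] [DecidableEq I] [CommGroupWithZero G]
  {ε : I → I → ℤ} {k : I} {A A' : I → G}

theorem prod_zpow_mutMatrix_self (hkk : ε k k = 0) (hA : ∀ j, A j ≠ 0)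
    (hA' : ∀ j ≠ k, A' j = A j) :
    ∏ j, A' j ^ mutMatrix ε k k j = (∏ j, A j ^ ε k j)⁻¹ := by
  rw [prod_zpow_eq_of_eq_off (e' := fun j => -ε k j) (hA k) hA'
      fun j _ => mutMatrix_self_left ε k j,
    mutMatrix_self_left, hkk, neg_zero, zpow_zero, zpow_zero, inv_one, one_mul, one_mul,
    ← prod_inv_distrib]
  simp only [zpow_neg]

/-- `Q` is the monomial of the exchange binomial `A'_k A_k` on the side of the sign of `ε_ik`. -/
theorem prod_zpow_mutMatrix_of_ne (hkk : ε k k = 0) (hA : ∀ j, A j ≠ 0)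
    (hA' : ∀ j ≠ k, A' j = A j) {i : I} (hi : i ≠ k) :
    ∏ j, A' j ^ mutMatrix ε k i j = (∏ j, A j ^ ε i j) *
      (A' k * A k / ∏ j, A j ^ ((ε i k).sign * ε k j)⁺) ^ (-ε i k) := by
  rw [prod_zpow_eq_of_eq_off (e' := fun j => ε i j + ε i k * ((ε i k).sign * ε k j)⁺) (hA k) hA'
    fun j hj => mutMatrix_of_ne ε k hi hj, prod_zpow_add hA, mutMatrix_self_right]
  simp only [hkk, mul_zero, posPart_zero, add_zero, zpow_mul', prod_zpow, zpow_neg, mul_zpow,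
    div_eq_mul_inv, mul_inv, inv_zpow, inv_inv]
  exact mul_left_comm _ _ _

end Mutation

open Finset in
theorem p_map_commutes_with_mutation_general {I : Type*} [Fintype I] [DecidableEq I]
    {F : Type*} [Field F] (ε : I → I → ℤ) (hskew : ∀ i j, ε j i = -ε i j) (k : I)
    (A : I → F) (hA : ∀ j, A j ≠ 0)
    (X : I → F) (hX : ∀ i, X i = ∏ j, A j ^ ε i j)
    (A' : I → F)
    (hA'k : A' k = (A k)⁻¹ *
      ((∏ j ∈ univ.filter fun j => 0 < ε k j, A j ^ ε k j) +
        ∏ j ∈ univ.filter fun j => ε k j < 0, A j ^ (-ε k j)))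
    (hA'ne : ∀ i, i ≠ k → A' i = A i)
    (X' : I → F) (hX' : ∀ i, X' i = ∏ j, A' j ^ mutMatrix ε k i j) :
    X' k = (X k)⁻¹ ∧
    ∀ i, i ≠ k → X' i = X i * (1 + X k ^ (-(ε i k).sign)) ^ (-(ε i k)) := by
  have hkk : ε k k = 0 := by linarith [hskew k k]
  set P := ∏ j, A j ^ (ε k j)⁺ with hP_def
  set N := ∏ j, A j ^ (ε k j)⁻ with hN_def
  have hP : P ≠ 0 := prod_ne_zero_iff.2 fun j _ => zpow_ne_zero _ (hA j)
  have hN : N ≠ 0 := prod_ne_zero_iff.2 fun j _ => zpow_ne_zero _ (hA j)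
  have hXk : X k = P / N := by rw [hX, prod_zpow_eq_div_posPart_negPart hA]
  have hA'kAk : A' k * A k = P + N := by
    rw [hA'k, prod_filter_pos_zpow, prod_filter_neg_zpow, mul_right_comm, inv_mul_cancel₀ (hA k),
      one_mul]
  refine ⟨by rw [hX', hX, prod_zpow_mutMatrix_self hkk hA hA'ne], fun i hi => ?_⟩
  rw [hX' i, prod_zpow_mutMatrix_of_ne hkk hA hA'ne hi, hA'kAk, ← hX i]
  rcases lt_trichotomy (ε i k) 0 with h | h | h
  · simp only [Int.sign_eq_neg_one_of_neg h, neg_one_mul, posPart_neg, ← hN_def, neg_neg, zpow_one,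
      hXk]
    field_simp
    ring_nf
  · simp [h]
  · simp only [Int.sign_eq_one_of_pos h, one_mul, ← hP_def, zpow_neg_one, hXk, inv_div]
    field_simp

open Finset in
/-- The `p`-maps commute with cluster mutations: if `X_i = ∏_j A_j^{ε_{ij}}`,
and `A'` is the cluster `𝒜`-mutation of `A` at `k` while `X'_i = ∏_j A'_j^{ε'_{ij}}`
with `ε' = μ_k(ε)`, then `X'` is the cluster `𝒳`-mutation of `X` at `k`. -/
theorem p_map_commutes_with_mutation {I : Type*} [Fintype I] [DecidableEq I]
    {F : Type*} [Field F] (ε : I → I → ℤ) (hskew : ∀ i j, ε j i = -ε i j) (k : I)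
    (A : I → F) (hA : ∀ j, A j ≠ 0)
    (X : I → F) (hX : ∀ i, X i = ∏ j, A j ^ ε i j)
    (h1 : 1 + X k ≠ 0)
    (A' : I → F)
    (hA'k : A' k = (A k)⁻¹ *
      ((∏ j ∈ univ.filter fun j => 0 < ε k j, A j ^ ε k j) +
        ∏ j ∈ univ.filter fun j => ε k j < 0, A j ^ (-ε k j)))
    (hA'ne : ∀ i, i ≠ k → A' i = A i)
    (X' : I → F) (hX' : ∀ i, X' i = ∏ j, A' j ^ mutMatrix ε k i j) :
    X' k = (X k)⁻¹ ∧
    ∀ i, i ≠ k → X' i = X i * (1 + X k ^ (-(ε i k).sign)) ^ (-(ε i k)) :=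
  p_map_commutes_with_mutation_general ε hskew k A hA X hX A' hA'k hA'ne X' hX'
end
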